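/- arXiv:2204.00160 — 6 statements merged into one kernel-verified Lean document; each statement's English description precedes it below -/
import Mathlib

section
/- Let 0 → (M,T_M) →^i (ĝ,[·,·,·]_ĝ,T̂) →^p (g,[·,·,·]_g,T) → 0 be an abelian extension of Rota-Baxter 3-Lie algebras of weight λ, let s1, s2 be two sections of p, with common induced representation (M,ρ,T_M), and let (ψ1,χ1) and (ψ2,χ2) be the associated 2-cocycles (i(ψ_a(x,y,z)) = [s_a(x),s_a(y),s_a(z)]_ĝ − s_a([x,y,z]_g), i(χ_a(x)) = T̂(s_a(x)) − s_a(T(x)) for a = 1,2). Then (ψ1,χ1) and (ψ2,χ2) are cohomologous via the linear map γ : g → M determined by i(γ(x)) = s1(x) − s2(x) (note s1(x) − s2(x) ∈ ker p = im i). -/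
/-!
Basic notions for Rota-Baxter 3-Lie algebras of arbitrary weight,
following Guo–Qin–Wang–Zhou.
-/

namespace RBPaper

section Defs

variable (k : Type*) [Field k]
variable {g M E g₀ g₁ : Type*}
variable [AddCommGroup g] [Module k g] [AddCommGroup M] [Module k M]
variable [AddCommGroup E] [Module k E]
variable [AddCommGroup g₀] [Module k g₀] [AddCommGroup g₁] [Module k g₁]

/-- A map `g → g → g → M` is trilinear. -/
structure Trilinear (f : g → g → g → M) : Prop where
  lin₁ : ∀ y z, IsLinearMap k fun x => f x y z
  lin₂ : ∀ x z, IsLinearMap k fun y => f x y z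
  lin₃ : ∀ x y, IsLinearMap k fun z => f x y z

/-- A map of three arguments is alternating: it vanishes whenever two arguments coincide. -/
structure Alternating3 (f : g → g → g → M) : Prop where
  alt₁₂ : ∀ x y, f x x y = 0
  alt₂₃ : ∀ x y, f x y y = 0
  alt₁₃ : ∀ x y, f x y x = 0

/-- The Fundamental Identity of a ternary bracket. -/
def FundamentalIdentity (f : g → g → g → g) : Prop :=
  ∀ x₁ x₂ x₃ x₄ x₅, f x₁ x₂ (f x₃ x₄ x₅) =
    f (f x₁ x₂ x₃) x₄ x₅ + f x₃ (f x₁ x₂ x₄) x₅ + f x₃ x₄ (f x₁ x₂ x₅)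

/-- `f` is a 3-Lie algebra bracket on `g`. -/
structure Is3LieAlgebra (f : g → g → g → g) : Prop where
  tri : Trilinear k f
  alt : Alternating3 f
  fi : FundamentalIdentity f

/-- `T` is a Rota-Baxter operator of weight `lam` on `(g, f)`. -/
def IsRotaBaxterOp (lam : k) (f : g → g → g → g) (T : g → g) : Prop :=
  ∀ x y z, f (T x) (T y) (T z) =
    T (f (T x) (T y) z + f (T x) y (T z) + f x (T y) (T z) +
       lam • f (T x) y z + lam • f x (T y) z + lam • f x y (T z) +
       (lam * lam) • f x y z)

/-- `(g, f, T)` is a Rota-Baxter 3-Lie algebra of weight `lam`. -/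
structure IsRBThreeLie (lam : k) (f : g → g → g → g) (T : g → g) : Prop where
  lie : Is3LieAlgebra k f
  linT : IsLinearMap k T
  rb : IsRotaBaxterOp k lam f T

/-- `(M, ρ)` is a representation of the 3-Lie algebra `(g, f)`. -/
structure IsRep (f : g → g → g → g) (ρ : g → g → M → M) : Prop where
  lin₁ : ∀ y m, IsLinearMap k fun x => ρ x y m
  lin₂ : ∀ x m, IsLinearMap k fun y => ρ x y m
  lin₃ : ∀ x y, IsLinearMap k (ρ x y)
  alt : ∀ x m, ρ x x m = 0
  rep₁ : ∀ x₁ x₂ x₃ x₄ m, ρ x₁ x₂ (ρ x₃ x₄ m) =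
      ρ (f x₁ x₂ x₃) x₄ m + ρ x₃ (f x₁ x₂ x₄) m + ρ x₃ x₄ (ρ x₁ x₂ m)
  rep₂ : ∀ x₁ x₂ x₃ x₄ m, ρ x₁ (f x₂ x₃ x₄) m =
      ρ x₃ x₄ (ρ x₁ x₂ m) - ρ x₂ x₄ (ρ x₁ x₃ m) + ρ x₂ x₃ (ρ x₁ x₄ m)

/-- `(M, ρ, TM)` is a representation of the Rota-Baxter 3-Lie algebra
`(g, f, T)` of weight `lam`. -/
structure IsRBRep (lam : k) (f : g → g → g → g) (T : g → g)
    (ρ : g → g → M → M) (TM : M → M) : Prop where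
  rep : IsRep k f ρ
  linTM : IsLinearMap k TM
  rb : ∀ x y m, ρ (T x) (T y) (TM m) =
    TM (ρ (T x) (T y) m + ρ (T x) y (TM m) + ρ x (T y) (TM m) +
        lam • ρ (T x) y m + lam • ρ x (T y) m + lam • ρ x y (TM m) +
        (lam * lam) • ρ x y m)

/-- The derived bracket `[x,y,z]_T` of a Rota-Baxter 3-Lie algebra. -/
def derBracket (lam : k) (f : g → g → g → g) (T : g → g) : g → g → g → g :=
  fun x y z =>
    f (T x) (T y) z + f (T x) y (T z) + f x (T y) (T z) +
      lam • f (T x) y z + lam • f x (T y) z + lam • f x y (T z) +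
      (lam * lam) • f x y z

/-- A 2-cocycle `(ψ, χ)` of the Rota-Baxter 3-Lie algebra `(g, f, T)` of weight `lam`
with coefficients in the representation `(M, ρ, TM)`. -/
structure IsTwoCocycle (lam : k) (f : g → g → g → g) (T : g → g)
    (ρ : g → g → M → M) (TM : M → M) (ψ : g → g → g → M) (χ : g → M) : Prop where
  tri : Trilinear k ψ
  alt : Alternating3 ψ
  lin : IsLinearMap k χ
  c1 : ∀ x₁ x₂ x₃ x₄ x₅,
    ρ x₁ x₂ (ψ x₃ x₄ x₅) + ψ x₁ x₂ (f x₃ x₄ x₅) =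
      ψ (f x₁ x₂ x₃) x₄ x₅ + ψ x₃ (f x₁ x₂ x₄) x₅ + ψ x₃ x₄ (f x₁ x₂ x₅) +
        ρ x₄ x₅ (ψ x₁ x₂ x₃) + ρ x₅ x₃ (ψ x₁ x₂ x₄) + ρ x₃ x₄ (ψ x₁ x₂ x₅)
  c2 : ∀ x y z,
    ρ (T x) (T y) (χ z) + ρ (T z) (T x) (χ y) + ρ (T y) (T z) (χ x) +
        ψ (T x) (T y) (T z) =
      TM (ρ (T y) z (χ x) + ρ z (T x) (χ y) + ψ (T x) (T y) z) + χ (f (T x) (T y) z) +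
      TM (ρ (T x) y (χ z) + ρ y (T z) (χ x) + ψ (T x) y (T z)) + χ (f (T x) y (T z)) +
      TM (ρ x (T y) (χ z) + ρ (T z) x (χ y) + ψ x (T y) (T z)) + χ (f x (T y) (T z)) +
      lam • TM (ρ y z (χ x) + ψ (T x) y z) + lam • χ (f (T x) y z) +
      lam • TM (ρ z x (χ y) + ψ x (T y) z) + lam • χ (f x (T y) z) +
      lam • TM (ρ x y (χ z) + ψ x y (T z)) + lam • χ (f x y (T z)) +
      (lam * lam) • χ (f x y z) + (lam * lam) • TM (ψ x y z)

/-- A 1-parameter formal deformation `(μ_i, 𝒯_i)` of the Rota-Baxter 3-Lie algebra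
`(g, f, T)` of weight `lam`, given by its coefficientwise equations. -/
structure IsDeformation (lam : k) (f : g → g → g → g) (T : g → g)
    (μ : ℕ → g → g → g → g) (𝒯 : ℕ → g → g) : Prop where
  tri : ∀ i, Trilinear k (μ i)
  alt : ∀ i, Alternating3 (μ i)
  lin : ∀ i, IsLinearMap k (𝒯 i)
  μ₀ : μ 0 = f
  𝒯₀ : 𝒯 0 = T
  fi : ∀ n x₁ x₂ x₃ x₄ x₅,
    ∑ i ∈ Finset.range (n + 1), μ i x₁ x₂ (μ (n - i) x₃ x₄ x₅) =
      ∑ i ∈ Finset.range (n + 1),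
        (μ i (μ (n - i) x₁ x₂ x₃) x₄ x₅ + μ i x₃ (μ (n - i) x₁ x₂ x₄) x₅ +
          μ i x₃ x₄ (μ (n - i) x₁ x₂ x₅))
  rb : ∀ n x₁ x₂ x₃,
    (∑ i ∈ Finset.range (n + 1), ∑ j ∈ Finset.range (n - i + 1),
        ∑ l ∈ Finset.range (n - i - j + 1),
        μ i (𝒯 j x₁) (𝒯 l x₂) (𝒯 (n - i - j - l) x₃)) =
      (∑ i ∈ Finset.range (n + 1), ∑ j ∈ Finset.range (n - i + 1),
          ∑ l ∈ Finset.range (n - i - j + 1),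
          𝒯 i (μ j (𝒯 l x₁) (𝒯 (n - i - j - l) x₂) x₃ +
               μ j (𝒯 l x₁) x₂ (𝒯 (n - i - j - l) x₃) +
               μ j x₁ (𝒯 l x₂) (𝒯 (n - i - j - l) x₃))) +
        lam • (∑ i ∈ Finset.range (n + 1), ∑ j ∈ Finset.range (n - i + 1),
          𝒯 i (μ j (𝒯 (n - i - j) x₁) x₂ x₃ + μ j x₁ (𝒯 (n - i - j) x₂) x₃ +
               μ j x₁ x₂ (𝒯 (n - i - j) x₃))) +
        (lam * lam) • (∑ i ∈ Finset.range (n + 1), 𝒯 i (μ (n - i) x₁ x₂ x₃))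

/-- An abelian extension `0 → (M, TM) → (E, fE, TE) → (g, f, T) → 0`
of Rota-Baxter 3-Lie algebras of weight `lam`. -/
structure IsAbelianExt (lam : k) (f : g → g → g → g) (T : g → g) (TM : M → M)
    (fE : E → E → E → E) (TE : E → E) (i : M → E) (p : E → g) : Prop where
  base : IsRBThreeLie k lam f T
  total : IsRBThreeLie k lam fE TE
  linTM : IsLinearMap k TM
  lin_i : IsLinearMap k i
  lin_p : IsLinearMap k p
  i_rb : ∀ m, TE (i m) = i (TM m)
  p_bracket : ∀ a b c, p (fE a b c) = f (p a) (p b) (p c)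
  p_rb : ∀ a, p (TE a) = T (p a)
  inj : Function.Injective i
  surj : Function.Surjective p
  exact : ∀ a, p a = 0 ↔ a ∈ Set.range i
  abelian : ∀ (w : E) (n q : M), fE w (i n) (i q) = 0

/-- The semidirect-product type bracket on `g × M` twisted by `ψ`. -/
def extBracket (f : g → g → g → g) (ρ : g → g → M → M) (ψ : g → g → g → M) :
    g × M → g × M → g × M → g × M :=
  fun a b c =>
    (f a.1 b.1 c.1,
      ρ a.1 b.1 c.2 + ρ c.1 a.1 b.2 + ρ b.1 c.1 a.2 + ψ a.1 b.1 c.1)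

/-- The operator on `g × M` twisted by `χ`. -/
def extOp (T : g → g) (χ : g → M) (TM : M → M) : g × M → g × M :=
  fun a => (T a.1, χ a.1 + TM a.2)

/-- A Rota-Baxter 3-Lie 2-algebra of weight `lam` on the data
`(g₀, g₁, d, l3, l3m, l5, T0, T1, T2)`, where `l3m x y α` denotes the value of
the trilinear map `l3` with one argument `α` in `g₁` placed in the last slot
(the other placements being recovered by total skew-symmetry). -/
structure IsRB3Lie2Alg (lam : k) (d : g₁ → g₀) (l3 : g₀ → g₀ → g₀ → g₀)
    (l3m : g₀ → g₀ → g₁ → g₁) (l5 : g₀ → g₀ → g₀ → g₀ → g₀ → g₁)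
    (T0 : g₀ → g₀) (T1 : g₁ → g₁) (T2 : g₀ → g₀ → g₀ → g₁) : Prop where
  lin_d : IsLinearMap k d
  tri_l3 : Trilinear k l3
  alt_l3 : Alternating3 l3
  l3m_lin₁ : ∀ y α, IsLinearMap k fun x => l3m x y α
  l3m_lin₂ : ∀ x α, IsLinearMap k fun y => l3m x y α
  l3m_lin₃ : ∀ x y, IsLinearMap k (l3m x y)
  l3m_alt : ∀ x α, l3m x x α = 0
  l5_lin₁ : ∀ b c e e', IsLinearMap k fun a => l5 a b c e e'
  l5_lin₂ : ∀ a c e e', IsLinearMap k fun b => l5 a b c e e'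
  l5_lin₃ : ∀ a b e e', IsLinearMap k fun c => l5 a b c e e'
  l5_lin₄ : ∀ a b c e', IsLinearMap k fun e => l5 a b c e e'
  l5_lin₅ : ∀ a b c e, IsLinearMap k fun e' => l5 a b c e e'
  l5_alt₁₂ : ∀ a c e e', l5 a a c e e' = 0
  l5_alt₃₄ : ∀ a b c e', l5 a b c c e' = 0
  l5_alt₄₅ : ∀ a b c e, l5 a b c e e = 0
  l5_alt₃₅ : ∀ a b c e, l5 a b c e c = 0
  cond₁ : ∀ x y α, d (l3m x y α) = l3 x y (d α)
  cond₂ : ∀ x α β, l3m x (d α) β = - l3m x (d β) α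
  cond₃ : ∀ x₁ x₂ x₃ x₄ x₅, d (l5 x₁ x₂ x₃ x₄ x₅) =
    - l3 x₁ x₂ (l3 x₃ x₄ x₅) + l3 (l3 x₁ x₂ x₃) x₄ x₅ + l3 x₃ (l3 x₁ x₂ x₄) x₅ +
      l3 x₃ x₄ (l3 x₁ x₂ x₅)
  cond₄ : ∀ α x₂ x₃ x₄ x₅, l5 (d α) x₂ x₃ x₄ x₅ =
    - l3m x₂ (l3 x₃ x₄ x₅) α + l3m x₄ x₅ (l3m x₂ x₃ α) - l3m x₃ x₅ (l3m x₂ x₄ α) +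
      l3m x₃ x₄ (l3m x₂ x₅ α)
  cond₅ : ∀ x₁ x₂ α x₄ x₅, l5 x₁ x₂ (d α) x₄ x₅ =
    - l3m x₁ x₂ (l3m x₄ x₅ α) + l3m x₄ x₅ (l3m x₁ x₂ α) + l3m (l3 x₁ x₂ x₄) x₅ α +
      l3m x₄ (l3 x₁ x₂ x₅) α
  cond₆ : ∀ x₁ x₂ x₃ x₄ x₅ x₆ x₇,
    l3m x₆ x₇ (l5 x₁ x₂ x₃ x₄ x₅) - l3m x₅ x₇ (l5 x₁ x₂ x₃ x₄ x₆) +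
      l3m x₁ x₂ (l5 x₃ x₄ x₅ x₆ x₇) + l3m x₅ x₆ (l5 x₁ x₂ x₃ x₄ x₇) +
      l5 x₁ x₂ (l3 x₃ x₄ x₅) x₆ x₇ + l5 x₁ x₂ x₅ (l3 x₃ x₄ x₆) x₇ +
      l5 x₁ x₂ x₅ x₆ (l3 x₃ x₄ x₇) =
    l3m x₃ x₄ (l5 x₁ x₂ x₅ x₆ x₇) + l5 (l3 x₁ x₂ x₃) x₄ x₅ x₆ x₇ +
      l5 x₃ (l3 x₁ x₂ x₄) x₅ x₆ x₇ + l5 x₃ x₄ (l3 x₁ x₂ x₅) x₆ x₇ +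
      l5 x₃ x₄ x₅ (l3 x₁ x₂ x₆) x₇ + l5 x₁ x₂ x₃ x₄ (l3 x₅ x₆ x₇) +
      l5 x₃ x₄ x₅ x₆ (l3 x₁ x₂ x₇)
  lin_T0 : IsLinearMap k T0
  lin_T1 : IsLinearMap k T1
  T2_tri : Trilinear k T2
  T2_alt : Alternating3 T2
  condA : ∀ α, T0 (d α) = d (T1 α)
  condB : ∀ x y z,
    T0 (derBracket k lam l3 T0 x y z) - l3 (T0 x) (T0 y) (T0 z) = d (T2 x y z)
  condC : ∀ x y α,
    T1 (l3m (T0 x) (T0 y) α + l3m x (T0 y) (T1 α) + l3m (T0 x) y (T1 α) +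
        lam • l3m (T0 x) y α + lam • l3m x (T0 y) α + lam • l3m x y (T1 α) +
        (lam * lam) • l3m x y α) -
      l3m (T0 x) (T0 y) (T1 α) = T2 x y (d α)
  condD : ∀ x₁ x₂ x₃ x₄ x₅,
    l5 (T0 x₁) (T0 x₂) (T0 x₃) (T0 x₄) (T0 x₅) +
      l3m (T0 x₄) (T0 x₅) (T2 x₁ x₂ x₃) - l3m (T0 x₃) (T0 x₅) (T2 x₁ x₂ x₄) +
      l3m (T0 x₃) (T0 x₄) (T2 x₁ x₂ x₅) +
      T2 (derBracket k lam l3 T0 x₁ x₂ x₃) x₄ x₅ +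
      T2 x₃ (derBracket k lam l3 T0 x₁ x₂ x₄) x₅ +
      T2 x₃ x₄ (derBracket k lam l3 T0 x₁ x₂ x₅) =
    l3m (T0 x₁) (T0 x₂) (T2 x₃ x₄ x₅) + T2 x₁ x₂ (derBracket k lam l3 T0 x₃ x₄ x₅) +
      T1 (l5 x₁ x₂ x₃ x₄ x₅)

end Defs

end RBPaper

open RBPaper

/-- the 2-cocycles associated with two sections `s₁, s₂` of an
abelian extension of Rota-Baxter 3-Lie algebras of weight `lam` are cohomologous
via the linear map `γ` determined by `i (γ x) = s₁ x − s₂ x`. -/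
theorem abelianExt_cocycles_cohomologous
    {k : Type*} [Field k] [CharZero k]
    {g M E : Type*} [AddCommGroup g] [Module k g] [AddCommGroup M] [Module k M]
    [AddCommGroup E] [Module k E]
    (lam : k) (f : g → g → g → g) (T : g → g) (TM : M → M)
    (fE : E → E → E → E) (TE : E → E) (i : M → E) (p : E → g)
    (hext : IsAbelianExt k lam f T TM fE TE i p)
    (s₁ s₂ : g → E)
    (hs₁_lin : IsLinearMap k s₁) (hsec₁ : ∀ x, p (s₁ x) = x)
    (hs₂_lin : IsLinearMap k s₂) (hsec₂ : ∀ x, p (s₂ x) = x)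
    (ρ : g → g → M → M)
    (hρ₁ : ∀ x y m, i (ρ x y m) = fE (s₁ x) (s₁ y) (i m))
    (hρ₂ : ∀ x y m, i (ρ x y m) = fE (s₂ x) (s₂ y) (i m))
    (ψ₁ ψ₂ : g → g → g → M) (χ₁ χ₂ : g → M)
    (hψ₁ : ∀ x y z, i (ψ₁ x y z) = fE (s₁ x) (s₁ y) (s₁ z) - s₁ (f x y z))
    (hχ₁ : ∀ x, i (χ₁ x) = TE (s₁ x) - s₁ (T x))
    (hψ₂ : ∀ x y z, i (ψ₂ x y z) = fE (s₂ x) (s₂ y) (s₂ z) - s₂ (f x y z))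
    (hχ₂ : ∀ x, i (χ₂ x) = TE (s₂ x) - s₂ (T x))
    (γ : g → M) (hγ : ∀ x, i (γ x) = s₁ x - s₂ x) :
    (∀ x y z, ψ₁ x y z - ψ₂ x y z =
        ρ x y (γ z) + ρ y z (γ x) + ρ z x (γ y) - γ (f x y z)) ∧
      (∀ x, χ₁ x - χ₂ x = TM (γ x) - γ (T x)) := by
  have tri := hext.total.lie.tri
  have alt := hext.total.lie.alt
  have lin_i := hext.lin_i
  have inj := hext.inj
  have mineg : ∀ a : M, i (-a) = - i a := by
    intro a
    have h := lin_i.map_smul (-1 : k) a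
    simpa using h
  have miadd := lin_i.map_add
  have misub : ∀ a b : M, i (a - b) = i a - i b := by
    intro a b
    rw [sub_eq_add_neg, lin_i.map_add, mineg, sub_eq_add_neg]
  have TEneg : ∀ a : E, TE (-a) = - TE a := by
    intro a
    have h := hext.total.linT.map_smul (-1 : k) a
    simpa using h
  have TEsub : ∀ a b : E, TE (a - b) = TE a - TE b := by
    intro a b
    rw [sub_eq_add_neg, hext.total.linT.map_add, TEneg, sub_eq_add_neg]
  -- skew symmetry
  have swap12 : ∀ a b c : E, fE a b c = - fE b a c := by
    intro a b c
    have h0 := alt.alt₁₂ (a + b) c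
    rw [(tri.lin₁ (a+b) c).map_add, (tri.lin₂ a c).map_add, (tri.lin₂ b c).map_add,
      alt.alt₁₂ a c, alt.alt₁₂ b c] at h0
    have h1 : fE a b c + fE b a c = 0 := by
      rw [← h0]; abel
    exact eq_neg_of_add_eq_zero_left h1
  have swap23 : ∀ a b c : E, fE a b c = - fE a c b := by
    intro a b c
    have h0 := alt.alt₂₃ a (b + c)
    rw [(tri.lin₂ a (b+c)).map_add, (tri.lin₃ a b).map_add, (tri.lin₃ a c).map_add,
      alt.alt₂₃ a b, alt.alt₂₃ a c] at h0
    have h1 : fE a b c + fE a c b = 0 := by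
      rw [← h0]; abel
    exact eq_neg_of_add_eq_zero_left h1
  have cyc : ∀ a b c : E, fE a b c = fE b c a := by
    intro a b c
    rw [swap12 a b c, swap23 b a c, neg_neg]
  have z23 := hext.abelian
  have z13 : ∀ (w : E) (n q : M), fE (i n) w (i q) = 0 := by
    intro w n q
    rw [cyc (i n) w (i q)]; exact z23 w q n
  have z12 : ∀ (w : E) (n q : M), fE (i n) (i q) w = 0 := by
    intro w n q
    rw [cyc (i n) (i q) w]; exact z13 w q n
  have hs : ∀ u, s₁ u = s₂ u + i (γ u) := by
    intro u
    rw [hγ u]; abel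
  have expand : ∀ a b c d e f' : E, fE (a+b) (c+d) (e+f') =
      fE a c e + fE a c f' + fE a d e + fE a d f' +
      fE b c e + fE b c f' + fE b d e + fE b d f' := by
    intro a b c d e f'
    rw [(tri.lin₁ (c+d) (e+f')).map_add a b, (tri.lin₂ a (e+f')).map_add c d,
      (tri.lin₂ b (e+f')).map_add c d, (tri.lin₃ a c).map_add e f',
      (tri.lin₃ a d).map_add e f', (tri.lin₃ b c).map_add e f',
      (tri.lin₃ b d).map_add e f']
    abel
  constructor
  · intro x y z
    apply inj
    rw [misub, hψ₁, hψ₂, misub, miadd, miadd, hρ₂, hρ₂, hρ₂, hγ (f x y z),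
      hs x, hs y, hs z, expand,
      z23 (s₂ x) (γ y) (γ z), z13 (s₂ y) (γ x) (γ z), z12 (s₂ z) (γ x) (γ y),
      z12 (i (γ z)) (γ x) (γ y),
      cyc (i (γ x)) (s₂ y) (s₂ z), cyc (s₂ x) (i (γ y)) (s₂ z),
      cyc (i (γ y)) (s₂ z) (s₂ x), hs (f x y z)]
    abel
  · intro x
    apply inj
    rw [misub, hχ₁, hχ₂, misub, ← hext.i_rb, hγ, hγ, TEsub]
    abel
end

section
/- Let 0 → (M,T_M) →^{i_1} (ĝ_1,[·,·,·]_{ĝ_1},T̂_1) →^{p_1} (g,[·,·,·]_g,T) → 0 and 0 → (M,T_M) →^{i_2} (ĝ_2,[·,·,·]_{ĝ_2},T̂_2) →^{p_2} (g,[·,·,·]_g,T) → 0 be two abelian extensions of Rota-Baxter 3-Lie algebras of weight λ which are isomorphic via ζ : ĝ_1 → ĝ_2 (a bijective morphism of Rota-Baxter 3-Lie algebras with ζ∘i_1 = i_2 and p_2∘ζ = p_1). Let s_1 be a section of p_1. Then s_2 := ζ∘s_1 is a section of p_2, the representations of (g,T) on M induced by s_1 and s_2 coincide, and the associated 2-cocycles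 coincide: ψ_2 = ψ_1 and χ_2 = χ_1, where i_a(ψ_a(x,y,z)) = [s_a(x),s_a(y),s_a(z)]_{ĝ_a} − s_a([x,y,z]_g) and i_a(χ_a(x)) = T̂_a(s_a(x)) − s_a(T(x)). -/
open RBPaper

/-- isomorphic abelian extensions of Rota-Baxter 3-Lie algebras of
weight `lam` induce, via a section `s₁` and the section `s₂ = ζ ∘ s₁`, the same
representation on `M` and the same associated 2-cocycle. -/
theorem isomorphic_abelianExts_same_cocycle
    {k : Type*} [Field k] [CharZero k]
    {g M E₁ E₂ : Type*} [AddCommGroup g] [Module k g] [AddCommGroup M] [Module k M]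
    [AddCommGroup E₁] [Module k E₁] [AddCommGroup E₂] [Module k E₂]
    (lam : k) (f : g → g → g → g) (T : g → g) (TM : M → M)
    (fE₁ : E₁ → E₁ → E₁ → E₁) (TE₁ : E₁ → E₁) (i₁ : M → E₁) (p₁ : E₁ → g)
    (fE₂ : E₂ → E₂ → E₂ → E₂) (TE₂ : E₂ → E₂) (i₂ : M → E₂) (p₂ : E₂ → g)
    (hext₁ : IsAbelianExt k lam f T TM fE₁ TE₁ i₁ p₁)
    (hext₂ : IsAbelianExt k lam f T TM fE₂ TE₂ i₂ p₂)
    (ζ : E₁ → E₂) (hζ_bij : Function.Bijective ζ) (hζ_lin : IsLinearMap k ζ)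
    (hζ_bracket : ∀ a b c, ζ (fE₁ a b c) = fE₂ (ζ a) (ζ b) (ζ c))
    (hζ_rb : ∀ a, ζ (TE₁ a) = TE₂ (ζ a))
    (hζ_i : ∀ m, ζ (i₁ m) = i₂ m)
    (hζ_p : ∀ a, p₂ (ζ a) = p₁ a)
    (s₁ : g → E₁) (hs₁_lin : IsLinearMap k s₁) (hsec₁ : ∀ x, p₁ (s₁ x) = x)
    (ρ₁ ρ₂ : g → g → M → M)
    (hρ₁ : ∀ x y m, i₁ (ρ₁ x y m) = fE₁ (s₁ x) (s₁ y) (i₁ m))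
    (hρ₂ : ∀ x y m, i₂ (ρ₂ x y m) = fE₂ (ζ (s₁ x)) (ζ (s₁ y)) (i₂ m))
    (ψ₁ ψ₂ : g → g → g → M) (χ₁ χ₂ : g → M)
    (hψ₁ : ∀ x y z, i₁ (ψ₁ x y z) = fE₁ (s₁ x) (s₁ y) (s₁ z) - s₁ (f x y z))
    (hχ₁ : ∀ x, i₁ (χ₁ x) = TE₁ (s₁ x) - s₁ (T x))
    (hψ₂ : ∀ x y z,
      i₂ (ψ₂ x y z) = fE₂ (ζ (s₁ x)) (ζ (s₁ y)) (ζ (s₁ z)) - ζ (s₁ (f x y z)))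
    (hχ₂ : ∀ x, i₂ (χ₂ x) = TE₂ (ζ (s₁ x)) - ζ (s₁ (T x))) :
    (∀ x, p₂ (ζ (s₁ x)) = x) ∧
      (∀ x y m, ρ₁ x y m = ρ₂ x y m) ∧
      (∀ x y z, ψ₂ x y z = ψ₁ x y z) ∧
      (∀ x, χ₂ x = χ₁ x) := by
  have hsub : ∀ a b : E₁, ζ (a - b) = ζ a - ζ b := fun a b =>
    (hζ_lin.mk' ζ).map_sub a b
  refine ⟨fun x => by rw [hζ_p, hsec₁], ?_, ?_, ?_⟩
  · intro x y m
    apply hext₂.inj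
    rw [hρ₂, ← hζ_i, hρ₁, hζ_bracket, hζ_i]
  · intro x y z
    apply hext₂.inj
    rw [hψ₂, ← hζ_i, hψ₁, hsub, hζ_bracket]
  · intro x
    apply hext₂.inj
    rw [hχ₂, ← hζ_i, hχ₁, hsub, hζ_rb]
end

section
/- Let (g,[·,·,·],T) be a Rota-Baxter 3-Lie algebra of weight λ and (M,ρ,T_M) a representation of it. Let ψ : g×g×g → M be an alternating trilinear map and χ : g → M a linear map. Define on g⊕M the trilinear bracket [x+m, y+n, z+q]_ψ := [x,y,z] + ρ(x,y)q + ρ(z,x)n + ρ(y,z)m + ψ(x,y,z) and the linear operator T_χ(x+m) := T(x) + χ(x) + T_M(m). Then (g⊕M, [·,·,·]_ψ, T_χ) is a Rota-Baxter 3-Lie algebra of weight λ if and only if (ψ,χ) is a 2-cocycle of (g,T) with coefficients in (M,ρ,T_M). -/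
open RBPaper

/-- for an alternating trilinear `ψ : g×g×g → M` and a linear
`χ : g → M`, the twisted semidirect product `(g ⊕ M, [·,·,·]_ψ, T_χ)` is a
Rota-Baxter 3-Lie algebra of weight `lam` if and only if `(ψ, χ)` is a
2-cocycle of `(g, f, T)` with coefficients in `(M, ρ, TM)`. -/
theorem extension_iff_twoCocycle
    {k : Type*} [Field k] [CharZero k]
    {g M : Type*} [AddCommGroup g] [Module k g] [AddCommGroup M] [Module k M]
    (lam : k) (f : g → g → g → g) (T : g → g)
    (ρ : g → g → M → M) (TM : M → M)
    (halg : IsRBThreeLie k lam f T)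
    (hrep : IsRBRep k lam f T ρ TM)
    (ψ : g → g → g → M) (χ : g → M)
    (hψ_tri : Trilinear k ψ) (hψ_alt : Alternating3 ψ)
    (hχ_lin : IsLinearMap k χ) :
    IsRBThreeLie k lam (extBracket f ρ ψ) (extOp T χ TM) ↔
      IsTwoCocycle k lam f T ρ TM ψ χ := by
  obtain ⟨hlie, hTlin, hTrb⟩ := halg
  obtain ⟨hρ, hTMlin, hρrb⟩ := hrep
  -- basic linearity facts, stated explicitly
  have hρadd : ∀ a b (u v : M), ρ a b (u + v) = ρ a b u + ρ a b v :=
    fun a b u v => (hρ.lin₃ a b).map_add u v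
  have hρ0 : ∀ a b, ρ a b (0 : M) = 0 := fun a b => (hρ.lin₃ a b).map_zero
  have hρneg : ∀ a b (u : M), ρ a b (-u) = - ρ a b u := fun a b u => (hρ.lin₃ a b).map_neg u
  have hρsmul : ∀ a b (c : k) (u : M), ρ a b (c • u) = c • ρ a b u :=
    fun a b c u => (hρ.lin₃ a b).map_smul c u
  have hρadd1 : ∀ a b y (m : M), ρ (a + b) y m = ρ a y m + ρ b y m :=
    fun a b y m => (hρ.lin₁ y m).map_add a b
  have hρsmul1 : ∀ (c : k) a y (m : M), ρ (c • a) y m = c • ρ a y m :=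
    fun c a y m => (hρ.lin₁ y m).map_smul c a
  have hρadd2 : ∀ x a b (m : M), ρ x (a + b) m = ρ x a m + ρ x b m :=
    fun x a b m => (hρ.lin₂ x m).map_add a b
  have hρsmul2 : ∀ x (c : k) a (m : M), ρ x (c • a) m = c • ρ x a m :=
    fun x c a m => (hρ.lin₂ x m).map_smul c a
  have hsk : ∀ a b (m : M), ρ b a m = - ρ a b m := by
    intro a b m
    have h := hρ.alt (a + b) m
    simp only [hρadd1, hρadd2, hρ.alt] at h
    linear_combination (norm := abel) h
  have hfadd1 : ∀ a b y z, f (a + b) y z = f a y z + f b y z :=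
    fun a b y z => (hlie.tri.lin₁ y z).map_add a b
  have hfsmul1 : ∀ (c : k) a y z, f (c • a) y z = c • f a y z :=
    fun c a y z => (hlie.tri.lin₁ y z).map_smul c a
  have hfadd2 : ∀ x a b z, f x (a + b) z = f x a z + f x b z :=
    fun x a b z => (hlie.tri.lin₂ x z).map_add a b
  have hfsmul2 : ∀ x (c : k) a z, f x (c • a) z = c • f x a z :=
    fun x c a z => (hlie.tri.lin₂ x z).map_smul c a
  have hfadd3 : ∀ x y a b, f x y (a + b) = f x y a + f x y b :=
    fun x y a b => (hlie.tri.lin₃ x y).map_add a b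
  have hfsmul3 : ∀ x y (c : k) a, f x y (c • a) = c • f x y a :=
    fun x y c a => (hlie.tri.lin₃ x y).map_smul c a
  have hψadd1 : ∀ a b y z, ψ (a + b) y z = ψ a y z + ψ b y z :=
    fun a b y z => (hψ_tri.lin₁ y z).map_add a b
  have hψsmul1 : ∀ (c : k) a y z, ψ (c • a) y z = c • ψ a y z :=
    fun c a y z => (hψ_tri.lin₁ y z).map_smul c a
  have hψadd2 : ∀ x a b z, ψ x (a + b) z = ψ x a z + ψ x b z :=
    fun x a b z => (hψ_tri.lin₂ x z).map_add a b
  have hψsmul2 : ∀ x (c : k) a z, ψ x (c • a) z = c • ψ x a z :=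
    fun x c a z => (hψ_tri.lin₂ x z).map_smul c a
  have hψadd3 : ∀ x y a b, ψ x y (a + b) = ψ x y a + ψ x y b :=
    fun x y a b => (hψ_tri.lin₃ x y).map_add a b
  have hψsmul3 : ∀ x y (c : k) a, ψ x y (c • a) = c • ψ x y a :=
    fun x y c a => (hψ_tri.lin₃ x y).map_smul c a
  have hχadd : ∀ a b, χ (a + b) = χ a + χ b := fun a b => hχ_lin.map_add a b
  have hχsmul : ∀ (c : k) a, χ (c • a) = c • χ a := fun c a => hχ_lin.map_smul c a
  have hTadd : ∀ a b, T (a + b) = T a + T b := fun a b => hTlin.map_add a b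
  have hTsmul : ∀ (c : k) a, T (c • a) = c • T a := fun c a => hTlin.map_smul c a
  have hTMadd : ∀ (u v : M), TM (u + v) = TM u + TM v := fun u v => hTMlin.map_add u v
  have hTMsmul : ∀ (c : k) (u : M), TM (c • u) = c • TM u := fun c u => hTMlin.map_smul c u
  have hTM0 : TM (0 : M) = 0 := hTMlin.map_zero
  constructor
  · intro hext
    refine ⟨hψ_tri, hψ_alt, hχ_lin, ?_, ?_⟩
    · intro x₁ x₂ x₃ x₄ x₅
      have h := congrArg Prod.snd
        (hext.lie.fi (x₁, 0) (x₂, 0) (x₃, 0) (x₄, 0) (x₅, 0))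
      simp only [extBracket, Prod.mk_add_mk, hρ0, hρadd, zero_add, add_zero] at h
      linear_combination (norm := abel) h
    · intro x y z
      have h := congrArg Prod.snd (hext.rb (x, 0) (y, 0) (z, 0))
      simp only [extOp, extBracket, Prod.mk_add_mk, Prod.smul_mk, hρ0, hρadd, hTM0,
        hTMadd, hTMsmul, hχadd, hχsmul, smul_add, smul_zero, zero_add, add_zero] at h
      simp only [hTMadd, hTMsmul, smul_add]
      linear_combination (norm := abel) h
  · intro hc
    have hc1 := hc.c1
    have hc2 := hc.c2
    refine ⟨⟨⟨?_, ?_, ?_⟩, ⟨?_, ?_, ?_⟩, ?_⟩, ?_, ?_⟩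
    · -- lin₁ of extBracket
      intro b c
      constructor
      · intro a a'
        refine Prod.ext ?_ ?_ <;>
          simp only [extBracket, Prod.fst_add, Prod.snd_add, hfadd1, hρadd1, hρadd2,
            hρadd, hψadd1] <;> abel
      · intro t a
        refine Prod.ext ?_ ?_ <;>
          simp only [extBracket, Prod.smul_fst, Prod.smul_snd, hfsmul1, hρsmul1,
            hρsmul2, hρsmul, hψsmul1, smul_add] <;> abel
    · -- lin₂
      intro a c
      constructor
      · intro b b'
        refine Prod.ext ?_ ?_ <;>
          simp only [extBracket, Prod.fst_add, Prod.snd_add, hfadd2, hρadd1, hρadd2,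
            hρadd, hψadd2] <;> abel
      · intro t b
        refine Prod.ext ?_ ?_ <;>
          simp only [extBracket, Prod.smul_fst, Prod.smul_snd, hfsmul2, hρsmul1,
            hρsmul2, hρsmul, hψsmul2, smul_add] <;> abel
    · -- lin₃
      intro a b
      constructor
      · intro c c'
        refine Prod.ext ?_ ?_ <;>
          simp only [extBracket, Prod.fst_add, Prod.snd_add, hfadd3, hρadd1, hρadd2,
            hρadd, hψadd3] <;> abel
      · intro t c
        refine Prod.ext ?_ ?_ <;>
          simp only [extBracket, Prod.smul_fst, Prod.smul_snd, hfsmul3, hρsmul1,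
            hρsmul2, hρsmul, hψsmul3, smul_add] <;> abel
    · -- alt₁₂
      intro a c
      refine Prod.ext ?_ ?_ <;>
        simp only [extBracket, Prod.fst_zero, Prod.snd_zero, hlie.alt.alt₁₂,
          hψ_alt.alt₁₂, hρ.alt, hsk c.1 a.1, add_zero, zero_add, neg_add_cancel,
          add_neg_cancel]
    · -- alt₂₃
      intro a b
      refine Prod.ext ?_ ?_ <;>
        simp only [extBracket, Prod.fst_zero, Prod.snd_zero, hlie.alt.alt₂₃,
          hψ_alt.alt₂₃, hρ.alt, hsk a.1 b.1, add_zero, zero_add, neg_add_cancel,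
          add_neg_cancel]
    · -- alt₁₃
      intro a b
      refine Prod.ext ?_ ?_ <;>
        simp only [extBracket, Prod.fst_zero, Prod.snd_zero, hlie.alt.alt₁₃,
          hψ_alt.alt₁₃, hρ.alt, hsk b.1 a.1, add_zero, zero_add, neg_add_cancel,
          add_neg_cancel]
    · -- fundamental identity
      intro a₁ a₂ a₃ a₄ a₅
      obtain ⟨x₁, m₁⟩ := a₁; obtain ⟨x₂, m₂⟩ := a₂; obtain ⟨x₃, m₃⟩ := a₃
      obtain ⟨x₄, m₄⟩ := a₄; obtain ⟨x₅, m₅⟩ := a₅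
      refine Prod.ext ?_ ?_
      · simp only [extBracket, Prod.mk_add_mk]
        exact hlie.fi x₁ x₂ x₃ x₄ x₅
      · simp only [extBracket, Prod.mk_add_mk]
        have e1 := hρ.rep₁ x₁ x₂ x₃ x₄ m₅
        have e2 := hρ.rep₁ x₁ x₂ x₅ x₃ m₄
        have e3 := hρ.rep₁ x₁ x₂ x₄ x₅ m₃
        have e4 := hρ.rep₂ x₁ x₃ x₄ x₅ m₂
        have e5 := hρ.rep₂ x₂ x₃ x₄ x₅ m₁
        have e6 := hc1 x₁ x₂ x₃ x₄ x₅
        simp only [hρadd, hsk x₃ x₅, hsk x₁ x₃, hsk x₁ x₄, hsk x₁ x₅,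
          hsk x₁ (f x₃ x₄ x₅), hρneg, neg_neg] at e1 e2 e3 e4 e5 e6 ⊢
        linear_combination (norm := abel) e1 + e2 + e3 - e4 + e5 + e6
    · -- linearity of extOp
      constructor
      · intro a a'
        refine Prod.ext ?_ ?_ <;>
          simp only [extOp, Prod.fst_add, Prod.snd_add, hTadd, hχadd, hTMadd] <;> abel
      · intro t a
        refine Prod.ext ?_ ?_ <;>
          simp only [extOp, Prod.smul_fst, Prod.smul_snd, hTsmul, hχsmul, hTMsmul,
            smul_add]
    · -- Rota-Baxter identity
      intro a b c
      obtain ⟨x, m⟩ := a; obtain ⟨y, n⟩ := b; obtain ⟨z, q⟩ := c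
      refine Prod.ext ?_ ?_
      · simp only [extOp, extBracket, Prod.mk_add_mk, Prod.smul_mk]
        exact hTrb x y z
      · simp only [extOp, extBracket, Prod.mk_add_mk, Prod.smul_mk]
        have h1 := hρrb y z m
        have h2 := hρrb z x n
        have h3 := hρrb x y q
        have h4 := hc2 x y z
        simp only [hρadd, hχadd, hχsmul, hTMadd, hTMsmul, smul_add] at h1 h2 h3 h4 ⊢
        linear_combination (norm := abel) h1 + h2 + h3 + h4
end

section
/- Let (g0, g1, d, l3, l5, T0, T1, T2) be a skeletal Rota-Baxter 3-Lie 2-algebra of weight λ (i.e., d = 0). Then (g0, l3, T0) is a Rota-Baxter 3-Lie algebra of weight λ, and (g1, ρ, T1), where ρ(x,y)α := l3(x,y,α), is a representation of the Rota-Baxter 3-Lie algebra (g0, l3, T0) of weight λ. -/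
open RBPaper

/-- a skeletal Rota-Baxter 3-Lie 2-algebra of weight `lam`
(`d = 0`) gives a Rota-Baxter 3-Lie algebra `(g₀, l3, T0)` of weight `lam`,
and `(g₁, ρ, T1)` with `ρ(x,y)α := l3(x,y,α)` is a representation of it. -/
theorem skeletal_RB3Lie2Alg_gives_rep
    {k : Type*} [Field k] [CharZero k]
    {g₀ g₁ : Type*} [AddCommGroup g₀] [Module k g₀] [AddCommGroup g₁] [Module k g₁]
    (lam : k) (d : g₁ → g₀) (l3 : g₀ → g₀ → g₀ → g₀)
    (l3m : g₀ → g₀ → g₁ → g₁) (l5 : g₀ → g₀ → g₀ → g₀ → g₀ → g₁)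
    (T0 : g₀ → g₀) (T1 : g₁ → g₁) (T2 : g₀ → g₀ → g₀ → g₁)
    (h : IsRB3Lie2Alg k lam d l3 l3m l5 T0 T1 T2)
    (hskel : ∀ α, d α = 0) :
    IsRBThreeLie k lam l3 T0 ∧ IsRBRep k lam l3 T0 l3m T1 := by
  constructor
  · refine ⟨⟨h.tri_l3, h.alt_l3, ?_⟩, h.lin_T0, ?_⟩
    · intro x₁ x₂ x₃ x₄ x₅
      have h3 := h.cond₃ x₁ x₂ x₃ x₄ x₅
      rw [hskel] at h3
      rw [← sub_eq_zero, ← neg_eq_zero]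
      refine Eq.trans ?_ h3.symm
      abel
    · intro x y z
      have hb := h.condB x y z
      rw [hskel] at hb
      exact (sub_eq_zero.mp hb).symm
  · refine ⟨⟨h.l3m_lin₁, h.l3m_lin₂, h.l3m_lin₃, h.l3m_alt, ?_, ?_⟩, h.lin_T1, ?_⟩
    · intro x₁ x₂ x₃ x₄ m
      have hz5 : l5 x₁ x₂ (0 : g₀) x₃ x₄ = 0 := (h.l5_lin₃ x₁ x₂ x₃ x₄).map_zero
      have h5 := h.cond₅ x₁ x₂ m x₃ x₄
      rw [hskel, hz5] at h5
      rw [← sub_eq_zero, ← neg_eq_zero]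
      refine Eq.trans ?_ h5.symm
      abel
    · intro x₁ x₂ x₃ x₄ m
      have hz5' : l5 (0 : g₀) x₁ x₂ x₃ x₄ = 0 := (h.l5_lin₁ x₁ x₂ x₃ x₄).map_zero
      have h4 := h.cond₄ m x₁ x₂ x₃ x₄
      rw [hskel, hz5'] at h4
      rw [← sub_eq_zero, ← neg_eq_zero]
      refine Eq.trans ?_ h4.symm
      abel
    · intro x y m
      have hz : T2 x y (0 : g₀) = 0 := (h.T2_tri.lin₃ x y).map_zero
      have hc := h.condC x y m
      rw [hskel, hz] at hc
      rw [(sub_eq_zero.mp hc).symm]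
      congr 1
      abel
end

section
/- Let (g0, l3, T0) be a Rota-Baxter 3-Lie algebra of weight λ, let (g1, ρ, T1) be a representation of it, and let f : g0^5 → g1 (multilinear, alternating in its first two and in its last three arguments) and θ : g0×g0×g0 → g1 (alternating trilinear) be maps satisfying the degree-3 cocycle conditions: (i) for all x1,...,x7 ∈ g0: ρ(x5,x6)f(x1,x2,x3,x4,x7) − ρ(x5,x7)f(x1,x2,x3,x4,x6) + ρ(x6,x7)f(x1,x2,x3,x4,x5) + ρ(x1,x2)f(x3,x4,x5,x6,x7) + f(x1,x2,l3(x3,x4,x5),x6,x7) + f(x1,x2,x5,l3(x3,x4,x6),x7) + f(x1,x2,x5,x6,l3(x3,x4,x7)) = ρ(x3,x4)f(x1,x2,x5,x6,x7) + f(l3(x1,x2,x3),x4,x5,x6,x7) + f(x3,l3(x1,x2,x4),x5,x6,x7) + f(x3,x4,l3(x1,x2,x5),x6,x7) + f(x3,x4,x5,l3(x1,x2,x6),x7) + f(x1,x2,x3,x4,l3(x5,x6,x7)) + f(x3,x4,x5,x6,l3(x1,x2,x7)); and (ii) with L(a,b,c) := l3(T0 a, T0 b, c) + l3(a, T0 b,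 T0 c) + l3(T0 a, b, T0 c) + λ l3(T0 a, b, c) + λ l3(a, T0 b, c) + λ l3(a, b, T0 c) + λ² l3(a,b,c), for all x1,...,x5 ∈ g0: f(T0 x1, T0 x2, T0 x3, T0 x4, T0 x5) + ρ(T0 x4, T0 x5)θ(x1,x2,x3) − ρ(T0 x3, T0 x5)θ(x1,x2,x4) + ρ(T0 x3, T0 x4)θ(x1,x2,x5) + θ(L(x1,x2,x3), x4, x5) + θ(x3, L(x1,x2,x4), x5) + θ(x3, x4, L(x1,x2,x5)) = ρ(T0 x1, T0 x2)θ(x3,x4,x5) + θ(x1, x2, L(x3,x4,x5)) + T1(f(x1,x2,x3,x4,x5)). Then (g0, g1, d = 0, l3, l5 := f, T0, T1, T2 := θ), with l3 on mixed arguments defined by l3(x,y,α) := ρ(x,y)α, is a skeletal Rota-Baxter 3-Lie 2-algebra of weight λ (all defining conditions (1)–(6) and (a)–(d) hold). -/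
open RBPaper

/-- 3-cocycle data `(f, θ)` of a Rota-Baxter 3-Lie algebra
`(g₀, l3, T0)` of weight `lam` with coefficients in a representation
`(g₁, ρ, T1)` determines a skeletal Rota-Baxter 3-Lie 2-algebra of weight `lam`
with `d = 0`, mixed bracket `ρ`, `l5 := f` and `T2 := θ`. -/
theorem threeCocycle_gives_skeletal_RB3Lie2Alg
    {k : Type*} [Field k] [CharZero k]
    {g₀ g₁ : Type*} [AddCommGroup g₀] [Module k g₀] [AddCommGroup g₁] [Module k g₁]
    (lam : k) (l3 : g₀ → g₀ → g₀ → g₀) (T0 : g₀ → g₀)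
    (ρ : g₀ → g₀ → g₁ → g₁) (T1 : g₁ → g₁)
    (halg : IsRBThreeLie k lam l3 T0)
    (hrep : IsRBRep k lam l3 T0 ρ T1)
    (f : g₀ → g₀ → g₀ → g₀ → g₀ → g₁) (θ : g₀ → g₀ → g₀ → g₁)
    (hf_lin₁ : ∀ b c e e', IsLinearMap k fun a => f a b c e e')
    (hf_lin₂ : ∀ a c e e', IsLinearMap k fun b => f a b c e e')
    (hf_lin₃ : ∀ a b e e', IsLinearMap k fun c => f a b c e e')
    (hf_lin₄ : ∀ a b c e', IsLinearMap k fun e => f a b c e e')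
    (hf_lin₅ : ∀ a b c e, IsLinearMap k fun e' => f a b c e e')
    (hf_alt₁₂ : ∀ a c e e', f a a c e e' = 0)
    (hf_alt₃₄ : ∀ a b c e', f a b c c e' = 0)
    (hf_alt₄₅ : ∀ a b c e, f a b c e e = 0)
    (hf_alt₃₅ : ∀ a b c e, f a b c e c = 0)
    (hθ_tri : Trilinear k θ) (hθ_alt : Alternating3 θ)
    (hi : ∀ x₁ x₂ x₃ x₄ x₅ x₆ x₇,
      ρ x₅ x₆ (f x₁ x₂ x₃ x₄ x₇) - ρ x₅ x₇ (f x₁ x₂ x₃ x₄ x₆) +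
          ρ x₆ x₇ (f x₁ x₂ x₃ x₄ x₅) + ρ x₁ x₂ (f x₃ x₄ x₅ x₆ x₇) +
          f x₁ x₂ (l3 x₃ x₄ x₅) x₆ x₇ + f x₁ x₂ x₅ (l3 x₃ x₄ x₆) x₇ +
          f x₁ x₂ x₅ x₆ (l3 x₃ x₄ x₇) =
        ρ x₃ x₄ (f x₁ x₂ x₅ x₆ x₇) + f (l3 x₁ x₂ x₃) x₄ x₅ x₆ x₇ +
          f x₃ (l3 x₁ x₂ x₄) x₅ x₆ x₇ + f x₃ x₄ (l3 x₁ x₂ x₅) x₆ x₇ +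
          f x₃ x₄ x₅ (l3 x₁ x₂ x₆) x₇ + f x₁ x₂ x₃ x₄ (l3 x₅ x₆ x₇) +
          f x₃ x₄ x₅ x₆ (l3 x₁ x₂ x₇))
    (hii : ∀ x₁ x₂ x₃ x₄ x₅,
      f (T0 x₁) (T0 x₂) (T0 x₃) (T0 x₄) (T0 x₅) +
          ρ (T0 x₄) (T0 x₅) (θ x₁ x₂ x₃) - ρ (T0 x₃) (T0 x₅) (θ x₁ x₂ x₄) +
          ρ (T0 x₃) (T0 x₄) (θ x₁ x₂ x₅) +
          θ (derBracket k lam l3 T0 x₁ x₂ x₃) x₄ x₅ +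
          θ x₃ (derBracket k lam l3 T0 x₁ x₂ x₄) x₅ +
          θ x₃ x₄ (derBracket k lam l3 T0 x₁ x₂ x₅) =
        ρ (T0 x₁) (T0 x₂) (θ x₃ x₄ x₅) +
          θ x₁ x₂ (derBracket k lam l3 T0 x₃ x₄ x₅) +
          T1 (f x₁ x₂ x₃ x₄ x₅)) :
    IsRB3Lie2Alg k lam (fun _ : g₁ => (0 : g₀)) l3 ρ f T0 T1 θ := by

  have hz3 : ∀ x y : g₀, l3 x y 0 = 0 := fun x y => (halg.lie.tri.lin₃ x y).map_zero
  have hρz2 : ∀ (x : g₀) (m : g₁), ρ x 0 m = 0 := fun x m => (hrep.rep.lin₂ x m).map_zero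
  refine
    { lin_d := ⟨fun _ _ => (add_zero 0).symm, fun c _ => (smul_zero c).symm⟩
      tri_l3 := halg.lie.tri
      alt_l3 := halg.lie.alt
      l3m_lin₁ := fun y α => hrep.rep.lin₁ y α
      l3m_lin₂ := fun x α => hrep.rep.lin₂ x α
      l3m_lin₃ := fun x y => hrep.rep.lin₃ x y
      l3m_alt := hrep.rep.alt
      l5_lin₁ := hf_lin₁
      l5_lin₂ := hf_lin₂
      l5_lin₃ := hf_lin₃
      l5_lin₄ := hf_lin₄
      l5_lin₅ := hf_lin₅
      l5_alt₁₂ := hf_alt₁₂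
      l5_alt₃₄ := hf_alt₃₄
      l5_alt₄₅ := hf_alt₄₅
      l5_alt₃₅ := hf_alt₃₅
      cond₁ := ?_
      cond₂ := ?_
      cond₃ := ?_
      cond₄ := ?_
      cond₅ := ?_
      cond₆ := ?_
      lin_T0 := halg.linT
      lin_T1 := hrep.linTM
      T2_tri := hθ_tri
      T2_alt := hθ_alt
      condA := ?_
      condB := ?_
      condC := ?_
      condD := ?_ }
  · intro x y α
    simp [hz3]
  · intro x α β
    simp [hρz2]
  · intro x₁ x₂ x₃ x₄ x₅
    have h := halg.lie.fi x₁ x₂ x₃ x₄ x₅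
    rw [h]; abel
  · intro α x₂ x₃ x₄ x₅
    have h := hrep.rep.rep₂ x₂ x₃ x₄ x₅ α
    rw [(hf_lin₁ x₂ x₃ x₄ x₅).map_zero]
    rw [h]; abel
  · intro x₁ x₂ α x₄ x₅
    have h := hrep.rep.rep₁ x₁ x₂ x₄ x₅ α
    rw [(hf_lin₃ x₁ x₂ x₄ x₅).map_zero]
    rw [h]; abel
  · intro x₁ x₂ x₃ x₄ x₅ x₆ x₇
    have h := hi x₁ x₂ x₃ x₄ x₅ x₆ x₇
    abel_nf at h ⊢
    exact h
  · intro α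
    exact halg.linT.map_zero
  · intro x y z
    have h := halg.rb x y z
    simp only [derBracket, h, sub_self]
  · intro x y α
    have h := hrep.rb x y α
    rw [(hθ_tri.lin₃ x y).map_zero, sub_eq_zero, h]
    congr 1
    abel
  · intro x₁ x₂ x₃ x₄ x₅
    have h := hii x₁ x₂ x₃ x₄ x₅
    abel_nf at h ⊢
    exact h
end

section
/- Let (g0, g1, d, l3, l5, T0, T1, T2) be a strict Rota-Baxter 3-Lie 2-algebra of weight λ (i.e., l5 = 0 and T2 = 0). Define [α,β,γ]_{g1} := l3(d(α), d(β), γ) for α,β,γ ∈ g1 and S(x,y)(α) := l3(x,y,α) for x,y ∈ g0, α ∈ g1. Then ((g0, l3, T0), (g1, [·,·,·]_{g1}), d, S, T1) is a crossed module of Rota-Baxter 3-Lie algebras of weight λ: (g0, l3, T0) is a Rota-Baxter 3-Lie algebra of weight λ, (g1, [·,·,·]_{g1}) is a 3-Lie algebra, d is a homomorphism of 3-Lie algebras, (g1, S, T1) is a representation of the Rota-Baxter 3-Lie algebra (g0, l3, T0) of weight λ, and d(S(x,y)α) = l3(x, y, d(α)), T0∘d = d∘T1, S(d(α),d(β))γ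 = [α,β,γ]_{g1}, and S(x,d(α))β = −S(x,d(β))α for all x,y ∈ g0 and α,β,γ ∈ g1. -/
open RBPaper

private lemma aux4 {G : Type*} [AddCommGroup G] {a b c e : G}
    (h : (0 : G) = -a + b + c + e) : a = b + c + e := by
  have h1 : b + c + e - a = 0 := by rw [h]; abel
  exact (sub_eq_zero.mp h1).symm

private lemma aux4' {G : Type*} [AddCommGroup G] {a b c e : G}
    (h : (0 : G) = -a + b - c + e) : a = b - c + e := by
  have h1 : b - c + e - a = 0 := by rw [h]; abel
  exact (sub_eq_zero.mp h1).symm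

private lemma half_cancel {k G : Type*} [Field k] [CharZero k] [AddCommGroup G]
    [Module k G] {a : G} (h : a = -a) : a = 0 := by
  have h2 : (2 : k) • a = 0 := by
    rw [two_smul]; nth_rewrite 2 [h]; abel
  rcases smul_eq_zero.mp h2 with h' | h'
  · exact absurd h' two_ne_zero
  · exact h'

/-- a strict Rota-Baxter 3-Lie 2-algebra of weight `lam`
(`l5 = 0`, `T2 = 0`) gives a crossed module of Rota-Baxter 3-Lie algebras of
weight `lam`: `(g₀, l3, T0)` is a Rota-Baxter 3-Lie algebra, the bracket
`[α,β,γ] := l3(dα, dβ, γ)` makes `g₁` a 3-Lie algebra, `d` is a homomorphism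
of 3-Lie algebras, `(g₁, S, T1)` with `S(x,y)α := l3(x,y,α)` is a representation
of `(g₀, l3, T0)`, and the crossed-module identities hold. -/
theorem strict_RB3Lie2Alg_gives_crossedModule
    {k : Type*} [Field k] [CharZero k]
    {g₀ g₁ : Type*} [AddCommGroup g₀] [Module k g₀] [AddCommGroup g₁] [Module k g₁]
    (lam : k) (d : g₁ → g₀) (l3 : g₀ → g₀ → g₀ → g₀)
    (l3m : g₀ → g₀ → g₁ → g₁)
    (T0 : g₀ → g₀) (T1 : g₁ → g₁)
    (h : IsRB3Lie2Alg k lam d l3 l3m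
      (fun _ _ _ _ _ => (0 : g₁)) T0 T1 (fun _ _ _ => (0 : g₁))) :
    IsRBThreeLie k lam l3 T0 ∧
      Is3LieAlgebra k (fun α β γ => l3m (d α) (d β) γ) ∧
      (∀ α β γ, d (l3m (d α) (d β) γ) = l3 (d α) (d β) (d γ)) ∧
      IsRBRep k lam l3 T0 l3m T1 ∧
      (∀ x y α, d (l3m x y α) = l3 x y (d α)) ∧
      (∀ α, T0 (d α) = d (T1 α)) ∧
      (∀ α β γ, l3m (d α) (d β) γ = l3m (d α) (d β) γ) ∧
      (∀ x α β, l3m x (d α) β = - l3m x (d β) α) := by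
  have fi0 : FundamentalIdentity l3 := by
    intro x₁ x₂ x₃ x₄ x₅
    have hc : (0 : g₀) = -l3 x₁ x₂ (l3 x₃ x₄ x₅) + l3 (l3 x₁ x₂ x₃) x₄ x₅ +
        l3 x₃ (l3 x₁ x₂ x₄) x₅ + l3 x₃ x₄ (l3 x₁ x₂ x₅) := by
      have := h.cond₃ x₁ x₂ x₃ x₄ x₅
      simpa [h.lin_d.map_zero] using this
    exact aux4 hc
  have hrep₁ : ∀ x₁ x₂ x₃ x₄ (m : g₁), l3m x₁ x₂ (l3m x₃ x₄ m) =
      l3m (l3 x₁ x₂ x₃) x₄ m + l3m x₃ (l3 x₁ x₂ x₄) m + l3m x₃ x₄ (l3m x₁ x₂ m) := by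
    intro x₁ x₂ x₃ x₄ m
    have hc : (0 : g₁) = -l3m x₁ x₂ (l3m x₃ x₄ m) + l3m x₃ x₄ (l3m x₁ x₂ m) +
        l3m (l3 x₁ x₂ x₃) x₄ m + l3m x₃ (l3 x₁ x₂ x₄) m := h.cond₅ x₁ x₂ m x₃ x₄
    rw [aux4 hc]; abel
  have hrep₂ : ∀ x₁ x₂ x₃ x₄ (m : g₁), l3m x₁ (l3 x₂ x₃ x₄) m =
      l3m x₃ x₄ (l3m x₁ x₂ m) - l3m x₂ x₄ (l3m x₁ x₃ m) + l3m x₂ x₃ (l3m x₁ x₄ m) := by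
    intro x₁ x₂ x₃ x₄ m
    exact aux4' (h.cond₄ m x₁ x₂ x₃ x₄)
  have hrb0 : IsRotaBaxterOp k lam l3 T0 := by
    intro x y z
    have hc := h.condB x y z
    rw [h.lin_d.map_zero] at hc
    exact (sub_eq_zero.mp hc).symm
  refine ⟨⟨⟨h.tri_l3, h.alt_l3, fi0⟩, h.lin_T0, hrb0⟩, ?_, ?_, ?_, h.cond₁, h.condA,
    fun _ _ _ => rfl, h.cond₂⟩
  · -- g₁ is a 3-Lie algebra
    refine ⟨⟨?_, ?_, ?_⟩, ⟨?_, ?_, ?_⟩, ?_⟩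
    · intro y z
      exact ⟨fun a b => by rw [h.lin_d.map_add, (h.l3m_lin₁ _ _).map_add],
        fun c a => by rw [h.lin_d.map_smul, (h.l3m_lin₁ _ _).map_smul]⟩
    · intro x z
      exact ⟨fun a b => by rw [h.lin_d.map_add, (h.l3m_lin₂ _ _).map_add],
        fun c a => by rw [h.lin_d.map_smul, (h.l3m_lin₂ _ _).map_smul]⟩
    · intro x y
      exact ⟨fun a b => (h.l3m_lin₃ _ _).map_add a b,
        fun c a => (h.l3m_lin₃ _ _).map_smul c a⟩
    · intro α β; exact h.l3m_alt _ _
    · intro α β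
      have hc : l3m (d α) (d β) β = -(l3m (d α) (d β) β) := h.cond₂ (d α) β β
      exact half_cancel (k := k) hc
    · intro α β
      have hc := h.cond₂ (d α) β α
      rw [hc, h.l3m_alt, neg_zero]
    · intro α β γ δ ε
      simp only []
      rw [h.cond₁, h.cond₁]
      exact hrep₁ (d α) (d β) (d γ) (d δ) ε
  · intro α β γ; exact h.cond₁ _ _ _
  · -- representation
    refine ⟨⟨h.l3m_lin₁, h.l3m_lin₂, h.l3m_lin₃, h.l3m_alt, hrep₁, hrep₂⟩, h.lin_T1, ?_⟩
    intro x y m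
    have hc := h.condC x y m
    have h0 : l3m (T0 x) (T0 y) (T1 m) =
        T1 (l3m (T0 x) (T0 y) m + l3m x (T0 y) (T1 m) + l3m (T0 x) y (T1 m) +
          lam • l3m (T0 x) y m + lam • l3m x (T0 y) m + lam • l3m x y (T1 m) +
          (lam * lam) • l3m x y m) := (sub_eq_zero.mp hc).symm
    rw [h0]; congr 1; abel
end
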